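/- arXiv:2407.07438 — 5 statements merged into one kernel-verified Lean document; each statement's English description precedes it below -/
import Mathlib

section
/- Let A and B be n×n positive definite complex matrices and let s, t be real numbers with s < t. Then A ⪯ B in the near-order if and only if A ♮_s B ⪯ A ♮_t B in the near-order; that is, the curve of spectral geometric means t ↦ A ♮_t B is monotone increasing in t with respect to the near-order exactly when A ⪯ B. -/
open Matrix
open scoped ComplexOrder

/-- Real power of a matrix via functional calculus on the spectrum (junk value
if the matrix is not Hermitian). -/
noncomputable def mrpow {n : ℕ} (A : Matrix (Fin n) (Fin n) ℂ) (r : ℝ) :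
    Matrix (Fin n) (Fin n) ℂ :=
  if hA : A.IsHermitian then
    (hA.eigenvectorUnitary : Matrix (Fin n) (Fin n) ℂ) *
      diagonal (fun i => ((hA.eigenvalues i ^ r : ℝ) : ℂ)) *
      (star (hA.eigenvectorUnitary : Matrix (Fin n) (Fin n) ℂ))
  else A

/-- The metric geometric mean `A # B = A^{1/2} (A^{-1/2} B A^{-1/2})^{1/2} A^{1/2}`. -/
noncomputable def sharp {n : ℕ} (A B : Matrix (Fin n) (Fin n) ℂ) :
    Matrix (Fin n) (Fin n) ℂ :=
  mrpow A (1/2) * mrpow (mrpow A (-(1/2)) * B * mrpow A (-(1/2))) (1/2) * mrpow A (1/2)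

/-- The Loewner order `A ≤ B`, i.e. `B - A` is positive semidefinite. -/
def loewnerLE {n : ℕ} (A B : Matrix (Fin n) (Fin n) ℂ) : Prop := (B - A).PosSemidef

/-- The near-order `A ⪯ B`, i.e. `A⁻¹ # B ≥ I` in the Loewner order. -/
def nearLE {n : ℕ} (A B : Matrix (Fin n) (Fin n) ℂ) : Prop := loewnerLE 1 (sharp A⁻¹ B)

/-- The spectral geometric mean `A ♮ₜ B = (A⁻¹ # B)^t A (A⁻¹ # B)^t`. -/
noncomputable def spectralGM {n : ℕ} (t : ℝ) (A B : Matrix (Fin n) (Fin n) ℂ) :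
    Matrix (Fin n) (Fin n) ℂ :=
  mrpow (sharp A⁻¹ B) t * A * mrpow (sharp A⁻¹ B) t

/-!
Write `G = A⁻¹ # B`. The metric geometric mean `P # Q` is the unique positive definite solution
`Z` of the Riccati equation `Z P⁻¹ Z = Q`. Since `G^(t-s) (G^s A G^s) G^(t-s) = G^t A G^t`, this
gives `(A ♮ₛ B)⁻¹ # (A ♮ₜ B) = G^(t-s)`. Finally, for `r > 0` the eigenvalues of `G^r` are the
`r`-th powers of those of `G`, so `G^r ≥ I` iff `G ≥ I`.
-/

variable {n : ℕ} {A C G M P Q X : Matrix (Fin n) (Fin n) ℂ}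

lemma mrpow_of_isHermitian (hA : A.IsHermitian) (r : ℝ) :
    mrpow A r = (hA.eigenvectorUnitary : Matrix (Fin n) (Fin n) ℂ) *
      diagonal (fun i => ((hA.eigenvalues i ^ r : ℝ) : ℂ)) *
      star (hA.eigenvectorUnitary : Matrix (Fin n) (Fin n) ℂ) :=
  dif_pos hA

lemma Matrix.PosDef.conj_of_posDef (hP : P.PosDef) (hC : C.PosDef) : (C * P * C).PosDef := by
  simpa only [star_eq_conjTranspose, hC.1.eq] using
    (Matrix.IsUnit.posDef_star_right_conjugate_iff hC.isUnit).2 hP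

lemma mrpow_posDef (hA : A.PosDef) (r : ℝ) : (mrpow A r).PosDef := by
  rw [mrpow_of_isHermitian hA.1, Matrix.IsUnit.posDef_star_right_conjugate_iff Unitary.isUnit_coe,
    posDef_diagonal_iff]
  intro i
  exact_mod_cast Real.rpow_pos_of_pos (hA.eigenvalues_pos i) r

lemma mrpow_add (hA : A.PosDef) (r s : ℝ) : mrpow A (r + s) = mrpow A r * mrpow A s := by
  simp only [mrpow_of_isHermitian hA.1, mul_assoc]
  rw [← mul_assoc _ (hA.1.eigenvectorUnitary : Matrix (Fin n) (Fin n) ℂ),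
    Unitary.star_mul_self_of_mem hA.1.eigenvectorUnitary.2, one_mul,
    ← mul_assoc (diagonal _), diagonal_mul_diagonal]
  simp only [Real.rpow_add (hA.eigenvalues_pos _), Complex.ofReal_mul]

lemma mrpow_zero (hA : A.IsHermitian) : mrpow A 0 = 1 := by
  simp [mrpow_of_isHermitian hA]

lemma mrpow_one (hA : A.IsHermitian) : mrpow A 1 = A := by
  rw [mrpow_of_isHermitian hA]
  simp only [Real.rpow_one]
  exact hA.spectral_theorem.symm

lemma mrpow_mul_mrpow_neg (hA : A.PosDef) (r : ℝ) : mrpow A r * mrpow A (-r) = 1 := by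
  rw [← mrpow_add hA, add_neg_cancel, mrpow_zero hA.1]

lemma mrpow_neg_one (hA : A.PosDef) : mrpow A (-1) = A⁻¹ := by
  refine (Matrix.inv_eq_right_inv ?_).symm
  simpa only [mrpow_one hA.1] using mrpow_mul_mrpow_neg hA 1

lemma sharp_posDef (hP : P.PosDef) (hQ : Q.PosDef) : (sharp P Q).PosDef :=
  (mrpow_posDef (hQ.conj_of_posDef (mrpow_posDef hP _)) _).conj_of_posDef (mrpow_posDef hP _)

open scoped MatrixOrder Matrix.Norms.L2Operator in
lemma eq_mrpow_half_of_mul_self_eq (hM : M.PosDef) (hX : X.PosSemidef) (h : X * X = M) :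
    X = mrpow M (1 / 2) := by
  have hroot : mrpow M (1 / 2) * mrpow M (1 / 2) = M := by
    rw [← mrpow_add hM, add_halves, mrpow_one hM.1]
  rw [← CFC.sqrt_unique h hX.nonneg,
    ← CFC.sqrt_unique hroot (mrpow_posDef hM _).posSemidef.nonneg]

lemma eq_sharp_of_mul_inv_mul_eq (hP : P.PosDef) (hQ : Q.PosDef) (hG : G.PosDef)
    (h : G * P⁻¹ * G = Q) : G = sharp P Q := by
  set R := mrpow P (1 / 2)
  set R' := mrpow P (-(1 / 2))
  have hRR' : R * R' = 1 := mrpow_mul_mrpow_neg hP _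
  have hR'R : R' * R = 1 := by simpa only [neg_neg] using mrpow_mul_mrpow_neg hP (-(1 / 2))
  have hK : R' * G * R' = mrpow (R' * Q * R') (1 / 2) := by
    refine eq_mrpow_half_of_mul_self_eq (hQ.conj_of_posDef (mrpow_posDef hP _))
      (hG.conj_of_posDef (mrpow_posDef hP _)).posSemidef ?_
    have hR'R' : R' * R' = P⁻¹ := by
      rw [← mrpow_add hP, ← mrpow_neg_one hP]
      norm_num
    rw [← h, ← hR'R']
    simp only [mul_assoc]
  calc G = (R * R') * G * (R' * R) := by rw [hRR', hR'R, one_mul, mul_one]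
    _ = R * (R' * G * R') * R := by simp only [mul_assoc]
    _ = sharp P Q := by rw [hK]; rfl

lemma sharp_inv_conj_mrpow (hG : G.PosDef) (hA : A.PosDef) (s t : ℝ) :
    sharp (mrpow G s * A * mrpow G s)⁻¹ (mrpow G t * A * mrpow G t) = mrpow G (t - s) := by
  have hX := hA.conj_of_posDef (mrpow_posDef hG s)
  refine (eq_sharp_of_mul_inv_mul_eq hX.inv (hA.conj_of_posDef (mrpow_posDef hG t))
    (mrpow_posDef hG _) ?_).symm
  rw [nonsing_inv_nonsing_inv _ ((isUnit_iff_isUnit_det _).mp hX.isUnit)]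
  calc mrpow G (t - s) * (mrpow G s * A * mrpow G s) * mrpow G (t - s)
      = (mrpow G (t - s) * mrpow G s) * A * (mrpow G s * mrpow G (t - s)) := by
        simp only [mul_assoc]
    _ = mrpow G t * A * mrpow G t := by
        rw [← mrpow_add hG, ← mrpow_add hG, sub_add_cancel, add_sub_cancel]

lemma one_loewnerLE_mrpow_iff_eigenvalues (hA : A.IsHermitian) (r : ℝ) :
    loewnerLE 1 (mrpow A r) ↔ ∀ i, 1 ≤ hA.eigenvalues i ^ r := by
  have hconj : mrpow A r - 1 = (hA.eigenvectorUnitary : Matrix (Fin n) (Fin n) ℂ) *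
      diagonal (fun i => ((hA.eigenvalues i ^ r : ℝ) : ℂ) - 1) *
      star (hA.eigenvectorUnitary : Matrix (Fin n) (Fin n) ℂ) := by
    rw [← diagonal_sub, diagonal_one, mul_sub, sub_mul, mul_one,
      Unitary.mul_star_self_of_mem hA.eigenvectorUnitary.2, mrpow_of_isHermitian hA]
  rw [loewnerLE, hconj, Matrix.IsUnit.posSemidef_star_right_conjugate_iff Unitary.isUnit_coe,
    posSemidef_diagonal_iff]
  refine forall_congr' fun i => ?_
  rw [sub_nonneg, ← Complex.ofReal_one, Complex.real_le_real]

lemma one_loewnerLE_mrpow_iff (hA : A.PosSemidef) {r : ℝ} (hr : 0 < r) :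
    loewnerLE 1 (mrpow A r) ↔ loewnerLE 1 A := by
  have h1 := one_loewnerLE_mrpow_iff_eigenvalues hA.1 1
  simp only [mrpow_one hA.1, Real.rpow_one] at h1
  rw [one_loewnerLE_mrpow_iff_eigenvalues hA.1, h1]
  refine forall_congr' fun i => ?_
  rw [← Real.rpow_le_rpow_iff zero_le_one (hA.eigenvalues_nonneg i) hr, Real.one_rpow]

theorem spectralGM_nearLE_monotone_iff {n : ℕ} (A B : Matrix (Fin n) (Fin n) ℂ)
    (hA : A.PosDef) (hB : B.PosDef) (s t : ℝ) (hst : s < t) :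
    nearLE A B ↔ nearLE (spectralGM s A B) (spectralGM t A B) := by
  have hG : (sharp A⁻¹ B).PosDef := sharp_posDef hA.inv hB
  unfold nearLE spectralGM
  rw [sharp_inv_conj_mrpow hG hA, one_loewnerLE_mrpow_iff hG.posSemidef (sub_pos.2 hst)]
end

section
/- Let A and B be n×n positive definite complex matrices and let s, t be real numbers with s < t such that the matrices (1-s)I + s(A^{-1} # B) and (1-t)I + t(A^{-1} # B) are positive definite. Then A ⪯ B in the near-order if and only if A ◇_s B ⪯ A ◇_t B in the near-order. -/
/-!
Put `X = A⁻¹ # B` and `f x = (1 - t + t x) / (1 - s + s x)`. Functions of `X` commute, so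
`Y = f(X)` satisfies `Y ((1 - s) I + s X) = (1 - t) I + t X = ((1 - s) I + s X) Y`, whence
`A ◇_t B = Y (A ◇_s B) Y`. The Riccati identity `P⁻¹ # (Y P Y) = Y` turns the near-order
`A ◇_s B ⪯ A ◇_t B` into `Y ≥ I`, which by the spectral mapping theorem says `f ≥ 1` on the
spectrum of `X`. Since `s < t` and `1 - s + s x > 0` there, `f x ≥ 1 ↔ x ≥ 1`, and `X ≥ I` is
`A ⪯ B`.
-/

open Matrix
open scoped ComplexOrder

/-- The Wasserstein mean `A ◇ₜ B = [(1-t)I + t(A⁻¹ # B)] A [(1-t)I + t(A⁻¹ # B)]`. -/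
noncomputable def wassersteinMean {n : ℕ} (t : ℝ) (A B : Matrix (Fin n) (Fin n) ℂ) :
    Matrix (Fin n) (Fin n) ℂ :=
  ((1 - t) • (1 : Matrix (Fin n) (Fin n) ℂ) + t • sharp A⁻¹ B) * A *
    ((1 - t) • (1 : Matrix (Fin n) (Fin n) ℂ) + t • sharp A⁻¹ B)

open scoped MatrixOrder

noncomputable def affineRatio (s t x : ℝ) : ℝ := (1 - t + t * x) / (1 - s + s * x)

lemma continuousOn_affineRatio {s t : ℝ} {S : Set ℝ} (hs : ∀ x ∈ S, 1 - s + s * x ≠ 0) :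
    ContinuousOn (affineRatio s t) S :=
  .div (by fun_prop) (by fun_prop) hs

lemma one_le_affineRatio_iff {s t x : ℝ} (hst : s < t) (hx : 0 < 1 - s + s * x) :
    1 ≤ affineRatio s t x ↔ 1 ≤ x := by
  rw [affineRatio, one_le_div hx]
  constructor <;> intro h <;> nlinarith

section AffineFunctionalCalculus

variable {A : Type*} [Ring A] [StarRing A] [TopologicalSpace A] [Algebra ℝ A]
  [ContinuousFunctionalCalculus ℝ A IsSelfAdjoint] {X : A} {s t : ℝ}

lemma IsSelfAdjoint.smul_one_add_smul_eq_cfc (hX : IsSelfAdjoint X) (a b : ℝ) :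
    a • (1 : A) + b • X = cfc (fun x : ℝ => a + b * x) X := by
  rw [cfc_const_add a _ X, cfc_const_mul b _ X, cfc_id' ℝ X, Algebra.algebraMap_eq_smul_one]

lemma cfc_affineRatio_mul (hX : IsSelfAdjoint X) (hs : ∀ x ∈ spectrum ℝ X, 1 - s + s * x ≠ 0) :
    cfc (affineRatio s t) X * ((1 - s) • (1 : A) + s • X) = (1 - t) • 1 + t • X := by
  rw [hX.smul_one_add_smul_eq_cfc, hX.smul_one_add_smul_eq_cfc,
    ← cfc_mul _ _ X (continuousOn_affineRatio hs)]
  exact cfc_congr fun x hx => div_mul_cancel₀ _ (hs x hx)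

lemma mul_cfc_affineRatio (hX : IsSelfAdjoint X) (hs : ∀ x ∈ spectrum ℝ X, 1 - s + s * x ≠ 0) :
    ((1 - s) • (1 : A) + s • X) * cfc (affineRatio s t) X = (1 - t) • 1 + t • X := by
  rw [hX.smul_one_add_smul_eq_cfc, hX.smul_one_add_smul_eq_cfc,
    ← cfc_mul _ _ X (hg := continuousOn_affineRatio hs)]
  exact cfc_congr fun x hx => mul_div_cancel₀ _ (hs x hx)

end AffineFunctionalCalculus

namespace Matrix

variable {n : ℕ} {M P Q X Y : Matrix (Fin n) (Fin n) ℂ}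

lemma nearLE_iff_one_le_sharp : nearLE P Q ↔ 1 ≤ sharp P⁻¹ Q := Iff.rfl

lemma IsHermitian.mrpow_eq_cfc (hM : M.IsHermitian) (r : ℝ) :
    mrpow M r = cfc (fun x : ℝ => x ^ r) M := by
  rw [hM.cfc_eq, IsHermitian.cfc, mrpow, dif_pos hM, Unitary.conjStarAlgAut_apply]
  rfl

lemma isHermitian_mrpow (hM : M.IsHermitian) (r : ℝ) : (mrpow M r).IsHermitian :=
  hM.mrpow_eq_cfc r ▸ cfc_predicate _ M

lemma isHermitian_sharp (hP : P.IsHermitian) (hQ : Q.IsHermitian) : (sharp P Q).IsHermitian := by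
  have hinner := isHermitian_mul_mul_conjTranspose (mrpow P (-(1/2))) hQ
  rw [(isHermitian_mrpow hP _).eq] at hinner
  have h := isHermitian_mul_mul_conjTranspose (mrpow P (1/2)) (isHermitian_mrpow hinner (1/2))
  rwa [(isHermitian_mrpow hP _).eq] at h

lemma PosSemidef.mrpow_half (hM : M.PosSemidef) : mrpow M (1/2) = CFC.sqrt M := by
  rw [hM.1.mrpow_eq_cfc, CFC.sqrt_eq_real_sqrt M hM.nonneg, cfcₙ_eq_cfc]
  exact cfc_congr fun x _ => (Real.sqrt_eq_rpow x).symm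

lemma PosDef.mrpow_neg_half (hM : M.PosDef) : mrpow M (-(1/2)) = (CFC.sqrt M)⁻¹ := by
  rw [← hM.posSemidef.mrpow_half]
  refine (inv_eq_left_inv ?_).symm
  rw [hM.1.mrpow_eq_cfc, hM.1.mrpow_eq_cfc, ← cfc_mul _ _ M (finite_real_spectrum.continuousOn _),
    ← cfc_const_one ℝ M]
  refine cfc_congr fun x hx => ?_
  rw [← Real.rpow_add (hM.isStrictlyPositive.spectrum_pos hx)]
  norm_num

lemma PosDef.sharp_eq (hP : P.PosDef) (hQ : Q.PosSemidef) :
    sharp P Q = CFC.sqrt P * CFC.sqrt ((CFC.sqrt P)⁻¹ * Q * (CFC.sqrt P)⁻¹) * CFC.sqrt P := by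
  have hR := (CFC.sqrt_nonneg P).posSemidef.1.inv
  have hinner := hQ.mul_mul_conjTranspose_same (CFC.sqrt P)⁻¹
  rw [hR.eq] at hinner
  rw [sharp, hP.posSemidef.mrpow_half, hP.mrpow_neg_half, hinner.mrpow_half]

theorem PosDef.sharp_inv_mul_mul_self (hP : P.PosDef) (hY : Y.PosSemidef) :
    sharp P⁻¹ (Y * P * Y) = Y := by
  set R := CFC.sqrt P
  have hRR : R * R = P := CFC.sqrt_mul_sqrt_self P hP.posSemidef.nonneg
  have hR : IsUnit R.det := (isUnit_iff_isUnit_det R).mp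
    (CFC.isUnit_sqrt_iff_isStrictlyPositive.mpr hP.isStrictlyPositive)
  have hYPY : (Y * P * Y).PosSemidef := by
    simpa only [hY.1.eq] using hP.posSemidef.mul_mul_conjTranspose_same Y
  have hRYR : 0 ≤ R * Y * R := by
    have hRh : Rᴴ = R := (CFC.sqrt_nonneg P).posSemidef.1.eq
    have := (hY.mul_mul_conjTranspose_same R).nonneg
    rwa [hRh] at this
  have hsq : R⁻¹⁻¹ * (Y * P * Y) * R⁻¹⁻¹ = (R * Y * R) * (R * Y * R) := by
    rw [nonsing_inv_nonsing_inv R hR, ← hRR]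
    simp only [mul_assoc]
  rw [hP.inv.sharp_eq hYPY, ← hP.posSemidef.inv_sqrt, hsq, CFC.sqrt_mul_self _ hRYR]
  calc R⁻¹ * (R * Y * R) * R⁻¹ = (R⁻¹ * R) * Y * (R * R⁻¹) := by simp only [mul_assoc]
    _ = Y := by rw [nonsing_inv_mul R hR, mul_nonsing_inv R hR, one_mul, mul_one]

lemma IsHermitian.posDef_smul_one_add_smul_iff (hX : X.IsHermitian) (a b : ℝ) :
    (a • (1 : Matrix (Fin n) (Fin n) ℂ) + b • X).PosDef ↔ ∀ x ∈ spectrum ℝ X, 0 < a + b * x := by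
  rw [← isStrictlyPositive_iff_posDef, hX.isSelfAdjoint.smul_one_add_smul_eq_cfc,
    cfc_isStrictlyPositive_iff _ X (finite_real_spectrum.continuousOn _)]

lemma PosDef.nearLE_mul_mul_self_iff (hP : P.PosDef) (hY : Y.PosSemidef) :
    nearLE P (Y * P * Y) ↔ 1 ≤ Y := by
  rw [nearLE_iff_one_le_sharp, hP.sharp_inv_mul_mul_self hY]

end Matrix

section WassersteinMean

variable {n : ℕ} {A B : Matrix (Fin n) (Fin n) ℂ} {s t : ℝ}

lemma posDef_wassersteinMean (hA : A.PosDef)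
    (hs : ((1 - s) • (1 : Matrix (Fin n) (Fin n) ℂ) + s • sharp A⁻¹ B).PosDef) :
    (wassersteinMean s A B).PosDef := by
  have := (IsUnit.posDef_star_right_conjugate_iff hs.isUnit).mpr hA
  rwa [star_eq_conjTranspose, hs.1.eq] at this

lemma wassersteinMean_eq_mul_mul (hX : (sharp A⁻¹ B).IsHermitian)
    (hs : ∀ x ∈ spectrum ℝ (sharp A⁻¹ B), 1 - s + s * x ≠ 0) :
    wassersteinMean t A B =
      cfc (affineRatio s t) (sharp A⁻¹ B) * wassersteinMean s A B *
        cfc (affineRatio s t) (sharp A⁻¹ B) := by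
  set Y := cfc (affineRatio s t) (sharp A⁻¹ B)
  set Cs := (1 - s) • (1 : Matrix (Fin n) (Fin n) ℂ) + s • sharp A⁻¹ B
  calc wassersteinMean t A B = (Y * Cs) * A * (Cs * Y) := by
        rw [cfc_affineRatio_mul hX.isSelfAdjoint hs, mul_cfc_affineRatio hX.isSelfAdjoint hs]
        rfl
    _ = Y * (Cs * A * Cs) * Y := by simp only [mul_assoc]

end WassersteinMean

theorem wassersteinMean_nearLE_monotone_iff {n : ℕ} (A B : Matrix (Fin n) (Fin n) ℂ)
    (hA : A.PosDef) (hB : B.PosDef) (s t : ℝ) (hst : s < t)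
    (hs : ((1 - s) • (1 : Matrix (Fin n) (Fin n) ℂ) + s • sharp A⁻¹ B).PosDef)
    (ht : ((1 - t) • (1 : Matrix (Fin n) (Fin n) ℂ) + t • sharp A⁻¹ B).PosDef) :
    nearLE A B ↔ nearLE (wassersteinMean s A B) (wassersteinMean t A B) := by
  have hX : (sharp A⁻¹ B).IsHermitian := isHermitian_sharp hA.inv.1 hB.1
  have hs_pos := (hX.posDef_smul_one_add_smul_iff _ _).mp hs
  have ht_pos := (hX.posDef_smul_one_add_smul_iff _ _).mp ht
  have hY : (cfc (affineRatio s t) (sharp A⁻¹ B)).PosSemidef :=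
    (cfc_nonneg fun x hx => div_nonneg (ht_pos x hx).le (hs_pos x hx).le).posSemidef
  rw [wassersteinMean_eq_mul_mul (t := t) hX fun x hx => (hs_pos x hx).ne',
    (posDef_wassersteinMean hA hs).nearLE_mul_mul_self_iff hY, nearLE_iff_one_le_sharp,
    CFC.one_le_iff (R := ℝ) (sharp A⁻¹ B) hX.isSelfAdjoint,
    one_le_cfc_iff _ _ (finite_real_spectrum.continuousOn _) hX.isSelfAdjoint]
  exact forall₂_congr fun x hx => (one_le_affineRatio_iff hst (hs_pos x hx)).symm
end

section
/- Let A, B, C be n×n positive definite complex matrices such that (A^{1/2} B A^{1/2})^{1/2} A^{-1} (A^{1/2} C A^{1/2})^{1/2} is Hermitian. If B ≤ C in the Loewner order, then A ♮_t C ⪯ A ♮_t B in the near-order for every t ∈ [-1, 0). -/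
open Matrix
open scoped ComplexOrder

/-!
Write `S = A⁻¹ # B` and `T = A⁻¹ # C`, so that `A ♮_t B = S^t A S^t` and `A ♮_t C = T^t A T^t`;
the Hermitian hypothesis says exactly that `S` and `T` commute. Monotonicity of the square root
turns `B ≤ C` into `S ≤ T`, and the Löwner–Heinz inequality (here `0 < -t ≤ 1`) into
`S^{-t} ≤ T^{-t}`. Hence the positive matrix `G = S^t T^{-t} = S^{t/2} T^{-t} S^{t/2}` satisfies
`G ≥ I`. As `G` commutes with `S^t` and `T^t`, it solves the Riccati equation
`G (T^t A T^t) G = S^t A S^t`, whose unique positive solution is `(A ♮_t C)⁻¹ # (A ♮_t B)`.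
-/

open scoped MatrixOrder Matrix.Norms.L2Operator

namespace CFC

variable {𝔸 : Type*} [CStarAlgebra 𝔸] [PartialOrder 𝔸] [StarOrderedRing 𝔸]

section Rpow

variable {a s t : 𝔸}

lemma rpow_mul_rpow_mul_rpow (ha : IsStrictlyPositive a) (x y z : ℝ) :
    a ^ x * a ^ y * a ^ z = a ^ (x + y + z) := by
  rw [rpow_add ha.isUnit, rpow_add ha.isUnit]

lemma rpow_half_mul_rpow_half (ha : 0 ≤ a) : a ^ (1 / 2 : ℝ) * a ^ (1 / 2 : ℝ) = a := by
  rw [← sqrt_eq_rpow, sqrt_mul_sqrt_self a ha]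

lemma one_le_rpow_neg_mul_rpow {p : ℝ} (hs : IsStrictlyPositive s) (hst : Commute s t)
    (h : s ^ p ≤ t ^ p) : 1 ≤ s ^ (-p) * t ^ p := by
  have hk : IsSelfAdjoint (s ^ (-p / 2)) := rpow_nonneg.isSelfAdjoint
  have hcomm : Commute (t ^ p) (s ^ (-p / 2)) :=
    (hst.cfc_nnreal (fun x => x ^ (-p / 2))).symm.cfc_nnreal (fun x => x ^ p)
  calc (1 : 𝔸) = s ^ (-p / 2) * s ^ p * s ^ (-p / 2) := by
        rw [rpow_mul_rpow_mul_rpow hs, ← rpow_zero s hs.nonneg]; ring_nf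
    _ ≤ s ^ (-p / 2) * t ^ p * s ^ (-p / 2) := by
        simpa only [hk.star_eq] using star_left_conjugate_le_conjugate h (s ^ (-p / 2))
    _ = s ^ (-p) * t ^ p := by
        rw [mul_assoc, hcomm.eq, ← mul_assoc, ← rpow_add hs.isUnit]; ring_nf

lemma rpow_mul_rpow_neg_conj_eq (ht : IsStrictlyPositive t) (hst : Commute s t) (x : ℝ) (a : 𝔸) :
    (s ^ x * t ^ (-x)) * (t ^ x * a * t ^ x) * (s ^ x * t ^ (-x)) = s ^ x * a * s ^ x := by
  have hcomm : Commute (t ^ x) (s ^ x) :=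
    ((hst.symm.cfc_nnreal (fun y => y ^ x)).symm.cfc_nnreal (fun y => y ^ x)).symm
  calc (s ^ x * t ^ (-x)) * (t ^ x * a * t ^ x) * (s ^ x * t ^ (-x))
      = s ^ x * (t ^ (-x) * t ^ x) * a * (t ^ x * s ^ x) * t ^ (-x) := by
        simp only [mul_assoc]
    _ = s ^ x * a * s ^ x * (t ^ x * t ^ (-x)) := by
        rw [hcomm.eq, rpow_neg_mul_rpow _ ht, mul_one]; simp only [mul_assoc]
    _ = s ^ x * a * s ^ x := by rw [rpow_mul_rpow_neg _ ht, mul_one]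

end Rpow

section InvSharp

/-- The geometric mean `a⁻¹ # b`, in a form that makes sense in any C⋆-algebra. -/
noncomputable def invSharp (a b : 𝔸) : 𝔸 :=
  a ^ (-(1 / 2) : ℝ) * (a ^ (1 / 2 : ℝ) * b * a ^ (1 / 2 : ℝ)) ^ (1 / 2 : ℝ) * a ^ (-(1 / 2) : ℝ)

variable {a b c g : 𝔸}

lemma invSharp_mul_self_mul_eq (ha : IsStrictlyPositive a) (hg : 0 ≤ g) :
    invSharp a (g * a * g) = g := by
  set k := a ^ (-(1 / 2) : ℝ)
  set h := a ^ (1 / 2 : ℝ)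
  have hsq : h * (g * a * g) * h = (h * g * h) * (h * g * h) := by
    nth_rw 1 [← rpow_half_mul_rpow_half ha.nonneg]
    simp only [h, mul_assoc]
  calc invSharp a (g * a * g) = k * (h * g * h) * k := by
        rw [invSharp, hsq, ← sqrt_eq_rpow,
          sqrt_mul_self _ (rpow_nonneg.isSelfAdjoint.conjugate_nonneg hg)]
    _ = (k * h) * g * (h * k) := by simp only [mul_assoc]
    _ = g := by rw [rpow_neg_mul_rpow _ ha, rpow_mul_rpow_neg _ ha, one_mul, mul_one]

lemma invSharp_mono (hbc : b ≤ c) : invSharp a b ≤ invSharp a c := by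
  have hk : IsSelfAdjoint (a ^ (-(1 / 2) : ℝ)) := rpow_nonneg.isSelfAdjoint
  have hh : IsSelfAdjoint (a ^ (1 / 2 : ℝ)) := rpow_nonneg.isSelfAdjoint
  have hm := star_left_conjugate_le_conjugate hbc (a ^ (1 / 2 : ℝ))
  rw [hh.star_eq] at hm
  simpa only [invSharp, hk.star_eq] using star_left_conjugate_le_conjugate
    (rpow_le_rpow ⟨by norm_num, by norm_num⟩ hm) (a ^ (-(1 / 2) : ℝ))

lemma _root_.IsStrictlyPositive.invSharp (ha : IsStrictlyPositive a)
    (hb : IsStrictlyPositive b) : IsStrictlyPositive (invSharp a b) := by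
  have hh : IsStrictlyPositive (a ^ (1 / 2 : ℝ)) := .rpow a _ ha
  have hk : IsStrictlyPositive (a ^ (-(1 / 2) : ℝ)) := .rpow a _ ha
  have hm : IsStrictlyPositive (a ^ (1 / 2 : ℝ) * b * a ^ (1 / 2 : ℝ)) :=
    .conjugate_of_isUnit_of_isSelfAdjoint _ _ hh.isUnit hh.isSelfAdjoint hb
  exact .conjugate_of_isUnit_of_isSelfAdjoint _ _ hk.isUnit hk.isSelfAdjoint (.rpow _ _ hm)

lemma commute_invSharp (ha : IsStrictlyPositive a)
    (h : IsSelfAdjoint ((a ^ (1 / 2 : ℝ) * b * a ^ (1 / 2 : ℝ)) ^ (1 / 2 : ℝ) * a ^ (-1 : ℝ) *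
      (a ^ (1 / 2 : ℝ) * c * a ^ (1 / 2 : ℝ)) ^ (1 / 2 : ℝ))) :
    Commute (invSharp a b) (invSharp a c) := by
  unfold invSharp
  set k := a ^ (-(1 / 2) : ℝ)
  set p := (a ^ (1 / 2 : ℝ) * b * a ^ (1 / 2 : ℝ)) ^ (1 / 2 : ℝ)
  set q := (a ^ (1 / 2 : ℝ) * c * a ^ (1 / 2 : ℝ)) ^ (1 / 2 : ℝ)
  have hkk : k * k = a ^ (-1 : ℝ) := by rw [← rpow_add ha.isUnit]; norm_num
  have hp : IsSelfAdjoint p := rpow_nonneg.isSelfAdjoint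
  have hq : IsSelfAdjoint q := rpow_nonneg.isSelfAdjoint
  have hinv : IsSelfAdjoint (a ^ (-1 : ℝ)) := rpow_nonneg.isSelfAdjoint
  have hswap : q * a ^ (-1 : ℝ) * p = p * a ^ (-1 : ℝ) * q := by
    simpa only [star_mul, hp.star_eq, hq.star_eq, hinv.star_eq, mul_assoc] using h.star_eq
  calc k * p * k * (k * q * k) = k * (p * (k * k) * q) * k := by simp only [mul_assoc]
    _ = k * (q * (k * k) * p) * k := by rw [hkk, hswap]
    _ = k * q * k * (k * p * k) := by simp only [mul_assoc]

end InvSharp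

end CFC

section Matrix

variable {n : ℕ} {A B G : Matrix (Fin n) (Fin n) ℂ}

lemma mrpow_eq_rpow (hA : 0 ≤ A) (r : ℝ) : mrpow A r = A ^ r := by
  have hA' := (Matrix.nonneg_iff_posSemidef.mp hA).1
  rw [CFC.rpow_eq_cfc_real hA, hA'.cfc_eq, mrpow, dif_pos hA', Matrix.IsHermitian.cfc,
    Unitary.conjStarAlgAut_apply]
  rfl

lemma inv_eq_rpow_neg_one (hA : IsStrictlyPositive A) : A⁻¹ = A ^ (-1 : ℝ) := by
  rw [Matrix.nonsing_inv_eq_ringInverse, CFC.inverse_eq_rpow_neg_one hA]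

lemma mrpow_inv (hA : IsStrictlyPositive A) (r : ℝ) : mrpow A⁻¹ r = A ^ (-r) := by
  rw [inv_eq_rpow_neg_one hA, mrpow_eq_rpow CFC.rpow_nonneg,
    CFC.rpow_rpow A _ _ (by norm_num) hA, neg_one_mul]

lemma sharp_inv_eq_invSharp (hA : IsStrictlyPositive A) (hB : 0 ≤ B) :
    sharp A⁻¹ B = CFC.invSharp A B := by
  rw [sharp, mrpow_inv hA, mrpow_inv hA, neg_neg,
    mrpow_eq_rpow (CFC.rpow_nonneg.isSelfAdjoint.conjugate_nonneg hB)]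
  rfl

lemma sharp_inv_mul_self_mul_eq (hA : IsStrictlyPositive A) (hG : 0 ≤ G) :
    sharp A⁻¹ (G * A * G) = G := by
  rw [sharp_inv_eq_invSharp hA (hG.isSelfAdjoint.conjugate_nonneg hA.nonneg),
    CFC.invSharp_mul_self_mul_eq hA hG]

end Matrix

theorem spectralGM_nearLE_of_loewnerLE_neg {n : ℕ} (A B C : Matrix (Fin n) (Fin n) ℂ)
    (hA : A.PosDef) (hB : B.PosDef) (hC : C.PosDef)
    (hherm : (mrpow (mrpow A (1/2) * B * mrpow A (1/2)) (1/2) * A⁻¹ *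
      mrpow (mrpow A (1/2) * C * mrpow A (1/2)) (1/2)).IsHermitian)
    (hBC : loewnerLE B C) (t : ℝ) (ht0 : -1 ≤ t) (ht1 : t < 0) :
    nearLE (spectralGM t A C) (spectralGM t A B) := by
  have hA' := hA.isStrictlyPositive
  rw [nearLE, spectralGM, spectralGM, sharp_inv_eq_invSharp hA' hB.posSemidef.nonneg,
    sharp_inv_eq_invSharp hA' hC.posSemidef.nonneg]
  set S := CFC.invSharp A B
  set T := CFC.invSharp A C
  have hS : IsStrictlyPositive S := hA'.invSharp hB.isStrictlyPositive
  have hT : IsStrictlyPositive T := hA'.invSharp hC.isStrictlyPositive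
  have hST : Commute S T := by
    refine CFC.commute_invSharp hA' ?_
    rwa [mrpow_eq_rpow hA'.nonneg, inv_eq_rpow_neg_one hA',
      mrpow_eq_rpow (CFC.rpow_nonneg.isSelfAdjoint.conjugate_nonneg hB.posSemidef.nonneg),
      mrpow_eq_rpow (CFC.rpow_nonneg.isSelfAdjoint.conjugate_nonneg hC.posSemidef.nonneg)] at hherm
  have hle : S ^ (-t) ≤ T ^ (-t) :=
    CFC.rpow_le_rpow ⟨by linarith, by linarith⟩ (CFC.invSharp_mono (Matrix.le_iff.mpr hBC))
  have hG : 1 ≤ S ^ t * T ^ (-t) := by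
    simpa only [neg_neg] using CFC.one_le_rpow_neg_mul_rpow hS hST hle
  have hX : IsStrictlyPositive (T ^ t * A * T ^ t) :=
    have hTt : IsStrictlyPositive (T ^ t) := .rpow T t hT
    .conjugate_of_isUnit_of_isSelfAdjoint _ _ hTt.isUnit hTt.isSelfAdjoint hA'
  rw [mrpow_eq_rpow hS.nonneg, mrpow_eq_rpow hT.nonneg, ← CFC.rpow_mul_rpow_neg_conj_eq hT hST,
    sharp_inv_mul_self_mul_eq hX (zero_le_one.trans hG)]
  exact Matrix.le_iff.mp hG
end

section
/- Let A and B be n×n positive definite complex matrices and define the operator fidelity F(X, Y) = (X^{1/2} Y X^{1/2})^{1/2}. If F(B, A) ⪯ B^{1/2} in the near-order, then for every natural number k ≥ 1 one has F(B^{2^k}, A) ⪯ B^{2^{k-1}} in the near-order. -/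
open Matrix
open scoped ComplexOrder

/-- The operator fidelity `F(X, Y) = (X^{1/2} Y X^{1/2})^{1/2}`. -/
noncomputable def fid {n : ℕ} (X Y : Matrix (Fin n) (Fin n) ℂ) :
    Matrix (Fin n) (Fin n) ℂ :=
  mrpow (mrpow X (1/2) * Y * mrpow X (1/2)) (1/2)

/-!
The near-order `x ⪯ y` is equivalent to `x ≤ F(x, y)`, and by the polar identity
`(c⋆ c)^{1/2} = c⋆ (c c⋆)^{-1/2} c` it implies the Loewner bound `F(y, x) ≤ y`. For
`x = F(b, a)`, `y = s := b^{1/2}` this gives `ρ := F(s, F(b, a)) ≤ s`, hence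
`bab = s^{1/2} ρ² s⁻¹ ρ² s^{1/2} ≤ s^{1/2} ρ³ s^{1/2}`, and the Furuta inequality
`(s^{1/2} ρ³ s^{1/2})^{1/2} ≤ s²` yields `F(b², a) = (bab)^{1/2} ≤ b`, so in particular
`F(b², a) ⪯ b = (b²)^{1/2}`. Iterating `b ↦ b²` gives the theorem. Nothing beyond the
continuous functional calculus is used, so the argument runs in any unital C⋆-algebra.
-/

section StarOrderedRing

variable {R : Type*} [Ring R] [StarRing R] [PartialOrder R] [StarOrderedRing R]

lemma IsUnit.star_left_conjugate_le_conjugate_iff {u a b : R} (hu : IsUnit u) :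
    star u * a * u ≤ star u * b * u ↔ a ≤ b := by
  rw [← sub_nonneg, ← sub_mul, ← mul_sub, hu.star_left_conjugate_nonneg_iff, sub_nonneg]

lemma IsStrictlyPositive.conjugate_le_conjugate_iff {c a b : R} (hc : IsStrictlyPositive c) :
    c * a * c ≤ c * b * c ↔ a ≤ b := by
  simpa only [hc.isSelfAdjoint.star_eq] using
    hc.isUnit.star_left_conjugate_le_conjugate_iff (a := a) (b := b)

end StarOrderedRing

namespace CFC

variable {A : Type*} [CStarAlgebra A] [PartialOrder A] [StarOrderedRing A]

lemma rpow_mul_rpow_mul_rpow_s8 {x : A} (hx : IsStrictlyPositive x) (p q r : ℝ) :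
    x ^ p * x ^ q * x ^ r = x ^ (p + q + r) := by
  rw [rpow_add hx.isUnit, rpow_add hx.isUnit]

lemma rpow_mul_self_mul_rpow {x : A} (hx : IsStrictlyPositive x) (p q : ℝ) :
    x ^ p * x * x ^ q = x ^ (p + 1 + q) := by
  rw [← rpow_mul_rpow_mul_rpow_s8 hx, rpow_one x]

lemma rpow_half_mul_rpow_half_s8 {x : A} (hx : 0 ≤ x) : x ^ (1/2 : ℝ) * x ^ (1/2 : ℝ) = x := by
  rw [← sqrt_eq_rpow, sqrt_mul_sqrt_self x]

lemma one_le_rpow_neg_half_conjugate_iff {x y : A} (hx : IsStrictlyPositive x) :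
    1 ≤ x ^ (-(1/2) : ℝ) * y * x ^ (-(1/2) : ℝ) ↔ x ≤ y := by
  rw [← (IsStrictlyPositive.rpow x (-(1/2)) hx).conjugate_le_conjugate_iff (a := x),
    rpow_mul_self_mul_rpow hx]
  norm_num [rpow_zero x]

lemma rpow_half_star_mul_self {c : A} (hc : IsUnit c) :
    (star c * c) ^ (1/2 : ℝ) = star c * (c * star c) ^ (-(1/2) : ℝ) * c := by
  have hm : IsStrictlyPositive (c * star c) := by
    simpa using hc.isStrictlyPositive_star_right_conjugate_iff.mpr isStrictlyPositive_one
  rw [← sqrt_eq_rpow]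
  refine sqrt_unique ?_ (star_left_conjugate_nonneg rpow_nonneg c)
  set m := c * star c
  calc star c * m ^ (-(1/2) : ℝ) * c * (star c * m ^ (-(1/2) : ℝ) * c)
      = star c * (m ^ (-(1/2) : ℝ) * m * m ^ (-(1/2) : ℝ)) * c := by
        simp only [m, mul_assoc]
    _ = star c * c := by
        rw [rpow_mul_self_mul_rpow hm]
        norm_num [rpow_zero m]

noncomputable def fidelity (x y : A) : A := (x ^ (1/2 : ℝ) * y * x ^ (1/2 : ℝ)) ^ (1/2 : ℝ)

lemma fidelity_mul_self (x : A) {y : A} (hy : 0 ≤ y) :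
    fidelity x y * fidelity x y = x ^ (1/2 : ℝ) * y * x ^ (1/2 : ℝ) := by
  rw [fidelity, ← sqrt_eq_rpow, sqrt_mul_sqrt_self _ (conjugate_nonneg_of_nonneg hy rpow_nonneg)]

lemma _root_.IsStrictlyPositive.fidelity {x y : A} (hx : IsStrictlyPositive x)
    (hy : IsStrictlyPositive y) : IsStrictlyPositive (fidelity x y) := by
  unfold CFC.fidelity
  cfc_tac

lemma fidelity_eq_conjugate_fidelity_rpow_neg_one {x y : A} (hx : IsStrictlyPositive x)
    (hy : IsStrictlyPositive y) :
    fidelity y x = y ^ (1/2 : ℝ) *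
      (x ^ (1/2 : ℝ) * fidelity x y ^ (-1 : ℝ) * x ^ (1/2 : ℝ)) * y ^ (1/2 : ℝ) := by
  have hx2 := IsStrictlyPositive.rpow x (1/2) hx
  have hy2 := IsStrictlyPositive.rpow y (1/2) hy
  set c := x ^ (1/2 : ℝ) * y ^ (1/2 : ℝ)
  have hc : IsUnit c := hx2.isUnit.mul hy2.isUnit
  have hstar : star c = y ^ (1/2 : ℝ) * x ^ (1/2 : ℝ) := by
    simp only [c, star_mul, hx2.isSelfAdjoint.star_eq, hy2.isSelfAdjoint.star_eq]
  have hcc : c * star c = x ^ (1/2 : ℝ) * y * x ^ (1/2 : ℝ) := by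
    rw [hstar, mul_assoc, ← mul_assoc (y ^ _), rpow_half_mul_rpow_half_s8 hy.nonneg, ← mul_assoc]
  have hcc' : star c * c = y ^ (1/2 : ℝ) * x * y ^ (1/2 : ℝ) := by
    rw [hstar, mul_assoc, ← mul_assoc (x ^ _), rpow_half_mul_rpow_half_s8 hx.nonneg, ← mul_assoc]
  have hm : IsStrictlyPositive (x ^ (1/2 : ℝ) * y * x ^ (1/2 : ℝ)) := by cfc_tac
  rw [fidelity, fidelity, ← hcc', rpow_half_star_mul_self hc, hcc,
    rpow_rpow _ _ _ (by norm_num) hm, hstar]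
  norm_num [c, mul_assoc]

lemma fidelity_le_of_le_fidelity {x y : A} (hx : IsStrictlyPositive x)
    (hy : IsStrictlyPositive y) (h : x ≤ fidelity x y) : fidelity y x ≤ y := by
  have hinv : fidelity x y ^ (-1 : ℝ) ≤ x ^ (-1 : ℝ) :=
    CStarAlgebra.rpow_neg_one_le_rpow_neg_one h hx
  have hx' : x ^ (1/2 : ℝ) * x ^ (-1 : ℝ) * x ^ (1/2 : ℝ) = 1 := by
    rw [rpow_mul_rpow_mul_rpow_s8 hx]
    norm_num [rpow_zero x]
  rw [fidelity_eq_conjugate_fidelity_rpow_neg_one hx hy]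
  calc _ ≤ y ^ (1/2 : ℝ) * (x ^ (1/2 : ℝ) * x ^ (-1 : ℝ) * x ^ (1/2 : ℝ)) *
        y ^ (1/2 : ℝ) :=
        conjugate_le_conjugate_of_nonneg (conjugate_le_conjugate_of_nonneg hinv rpow_nonneg)
          rpow_nonneg
    _ = y := by rw [hx', mul_one, rpow_half_mul_rpow_half_s8 hy.nonneg]

lemma le_fidelity_of_le {x y : A} (hx : IsStrictlyPositive x) (h : x ≤ y) :
    x ≤ fidelity x y := by
  have hsq : x ^ (1/2 : ℝ) * x * x ^ (1/2 : ℝ) ≤ x ^ (1/2 : ℝ) * y * x ^ (1/2 : ℝ) :=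
    conjugate_le_conjugate_of_nonneg h rpow_nonneg
  rw [rpow_mul_self_mul_rpow hx] at hsq
  have := rpow_le_rpow (p := 1/2) ⟨by norm_num, by norm_num⟩ hsq
  rwa [rpow_rpow _ _ _ (by norm_num) hx, show (1/2 + 1 + 1/2) * (1/2 : ℝ) = 1 by norm_num,
    rpow_one x] at this

/-- The case `p = 3`, `r = 1`, `q = 2` of the Furuta inequality. -/
lemma fidelity_rpow_three_le_of_le {r s : A} (hr : IsStrictlyPositive r) (h : r ≤ s) :
    fidelity s (r ^ (3 : ℝ)) ≤ s ^ (2 : ℝ) := by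
  have hs : IsStrictlyPositive s := hr.of_le h
  have hr3 : (r ^ (3 : ℝ)) ^ (1/2 : ℝ) = r ^ (3/2 : ℝ) := by
    rw [rpow_rpow _ _ _ (by norm_num) hr]
    norm_num
  have h4 : r ^ (4 : ℝ) ≤ r ^ (3/2 : ℝ) * s * r ^ (3/2 : ℝ) := by
    have := conjugate_le_conjugate_of_nonneg h (rpow_nonneg (a := r) (y := 3/2))
    rwa [rpow_mul_self_mul_rpow hr, show (3/2 + 1 + 3/2 : ℝ) = 4 by norm_num] at this
  have h2 : r ^ (2 : ℝ) ≤ fidelity (r ^ (3 : ℝ)) s := by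
    have := rpow_le_rpow (p := 1/2) ⟨by norm_num, by norm_num⟩ h4
    rwa [rpow_rpow _ _ _ (by norm_num) hr, show (4 * (1/2) : ℝ) = 2 by norm_num, ← hr3] at this
  have hinv := CStarAlgebra.rpow_neg_one_le_rpow_neg_one h2 (IsStrictlyPositive.rpow r 2 hr)
  have hmid : r ^ (3/2 : ℝ) * fidelity (r ^ (3 : ℝ)) s ^ (-1 : ℝ) * r ^ (3/2 : ℝ) ≤ r :=
    calc _ ≤ r ^ (3/2 : ℝ) * (r ^ (2 : ℝ)) ^ (-1 : ℝ) * r ^ (3/2 : ℝ) :=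
          conjugate_le_conjugate_of_nonneg hinv rpow_nonneg
      _ = r := by
          rw [rpow_rpow _ _ _ (by norm_num) hr, rpow_mul_rpow_mul_rpow_s8 hr]
          norm_num [rpow_one r]
  rw [fidelity_eq_conjugate_fidelity_rpow_neg_one (IsStrictlyPositive.rpow r 3 hr) hs, hr3]
  calc _ ≤ s ^ (1/2 : ℝ) * r * s ^ (1/2 : ℝ) :=
        conjugate_le_conjugate_of_nonneg hmid rpow_nonneg
    _ ≤ s ^ (1/2 : ℝ) * s * s ^ (1/2 : ℝ) := conjugate_le_conjugate_of_nonneg h rpow_nonneg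
    _ = s ^ (2 : ℝ) := by
        rw [rpow_mul_self_mul_rpow hs]
        norm_num

lemma fidelity_rpow_two_le_of_le_fidelity {a b : A} (ha : IsStrictlyPositive a)
    (hb : IsStrictlyPositive b) (h : fidelity b a ≤ fidelity (fidelity b a) (b ^ (1/2 : ℝ))) :
    fidelity (b ^ (2 : ℝ)) a ≤ b := by
  set s := b ^ (1/2 : ℝ)
  set c := fidelity b a
  have hs : IsStrictlyPositive s := IsStrictlyPositive.rpow b _ hb
  have hc : IsStrictlyPositive c := hb.fidelity ha
  set ρ := fidelity s c
  have hρ : IsStrictlyPositive ρ := hs.fidelity hc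
  have hρs : ρ ≤ s := fidelity_le_of_le_fidelity hc hs h
  have hρ2 : ρ * ρ = ρ ^ (2 : ℝ) := by
    rw [← sq, ← rpow_natCast ρ 2]
    norm_num
  have hρ3 : ρ * ρ * s ^ (-1 : ℝ) * (ρ * ρ) ≤ ρ ^ (3 : ℝ) :=
    calc _ ≤ ρ * ρ * ρ ^ (-1 : ℝ) * (ρ * ρ) :=
          conjugate_le_conjugate_of_nonneg
            (CStarAlgebra.rpow_neg_one_le_rpow_neg_one hρs hρ) (hρ2 ▸ rpow_nonneg)
      _ = ρ ^ (3 : ℝ) := by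
          rw [hρ2, rpow_mul_rpow_mul_rpow_s8 hρ]
          norm_num
  have hbab : b * a * b ≤ s ^ (1/2 : ℝ) * ρ ^ (3 : ℝ) * s ^ (1/2 : ℝ) :=
    calc b * a * b = (s * s) * a * (s * s) := by rw [rpow_half_mul_rpow_half_s8 hb.nonneg]
      _ = s * (c * c) * s := by
          rw [show c * c = s * a * s from fidelity_mul_self b ha.nonneg]
          simp only [mul_assoc]
      _ = (s ^ (1/2 : ℝ) * s ^ (1/2 : ℝ)) * c *
            (s ^ (1/2 : ℝ) * s ^ (-1 : ℝ) * s ^ (1/2 : ℝ)) * c *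
            (s ^ (1/2 : ℝ) * s ^ (1/2 : ℝ)) := by
          rw [rpow_half_mul_rpow_half_s8 hs.nonneg, rpow_mul_rpow_mul_rpow_s8 hs]
          norm_num [rpow_zero s, mul_assoc]
      _ = s ^ (1/2 : ℝ) * (ρ * ρ * s ^ (-1 : ℝ) * (ρ * ρ)) * s ^ (1/2 : ℝ) := by
          rw [fidelity_mul_self s hc.nonneg]
          simp only [mul_assoc]
      _ ≤ _ := conjugate_le_conjugate_of_nonneg hρ3 rpow_nonneg
  calc fidelity (b ^ (2 : ℝ)) a = (b * a * b) ^ (1/2 : ℝ) := by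
        rw [fidelity, rpow_rpow _ _ _ (by norm_num) hb]
        norm_num [rpow_one b]
    _ ≤ fidelity s (ρ ^ (3 : ℝ)) := rpow_le_rpow ⟨by norm_num, by norm_num⟩ hbab
    _ ≤ s ^ (2 : ℝ) := fidelity_rpow_three_le_of_le hρ hρs
    _ = b := by
        rw [rpow_rpow _ _ _ (by norm_num) hb]
        norm_num [rpow_one b]

theorem fidelity_rpow_two_pow_succ_le_fidelity {a b : A} (ha : IsStrictlyPositive a)
    (hb : IsStrictlyPositive b) (h : fidelity b a ≤ fidelity (fidelity b a) (b ^ (1/2 : ℝ)))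
    (k : ℕ) :
    fidelity (b ^ ((2 : ℝ) ^ (k + 1))) a ≤
      fidelity (fidelity (b ^ ((2 : ℝ) ^ (k + 1))) a) (b ^ ((2 : ℝ) ^ k)) := by
  have step {b' : A} (hb' : IsStrictlyPositive b')
      (h' : fidelity b' a ≤ fidelity (fidelity b' a) (b' ^ (1/2 : ℝ))) :
      fidelity (b' ^ (2 : ℝ)) a ≤ fidelity (fidelity (b' ^ (2 : ℝ)) a) b' :=
    le_fidelity_of_le ((IsStrictlyPositive.rpow b' 2 hb').fidelity ha)
      (fidelity_rpow_two_le_of_le_fidelity ha hb' h')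
  induction k with
  | zero => simpa [rpow_one b] using step hb h
  | succ k ih =>
    have hbk := IsStrictlyPositive.rpow b ((2 : ℝ) ^ (k + 1)) hb
    have := step hbk (by
      rwa [rpow_rpow _ _ _ (by positivity) hb, show (2 : ℝ) ^ (k + 1) * (1/2) = 2 ^ k by ring])
    rwa [rpow_rpow _ _ _ (by positivity) hb, ← pow_succ] at this

end CFC

section Matrix

open scoped Matrix.Norms.L2Operator MatrixOrder

variable {n : ℕ}

lemma mrpow_eq_rpow_s8 {X : Matrix (Fin n) (Fin n) ℂ} (hX : X.PosDef) (r : ℝ) :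
    mrpow X r = X ^ r := by
  rw [CFC.rpow_eq_cfc_real hX.posSemidef.nonneg, mrpow, dif_pos hX.isHermitian,
    hX.isHermitian.cfc_eq]
  rfl

lemma Matrix.PosDef.rpow {X : Matrix (Fin n) (Fin n) ℂ} (hX : X.PosDef) (r : ℝ) :
    (X ^ r).PosDef :=
  (IsStrictlyPositive.rpow X r hX.isStrictlyPositive).posDef

lemma Matrix.PosDef.rpow_half_mul_mul_rpow_half {X Y : Matrix (Fin n) (Fin n) ℂ} (hX : X.PosDef)
    (hY : Y.PosDef) : (X ^ (1/2 : ℝ) * Y * X ^ (1/2 : ℝ)).PosDef :=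
  (IsStrictlyPositive.conjugate_of_isUnit_of_isSelfAdjoint Y _ (hX.rpow _).isUnit
    (hX.rpow _).isHermitian hY.isStrictlyPositive).posDef

lemma fid_eq_fidelity {X Y : Matrix (Fin n) (Fin n) ℂ} (hX : X.PosDef) (hY : Y.PosDef) :
    fid X Y = CFC.fidelity X Y := by
  rw [fid, mrpow_eq_rpow_s8 hX, mrpow_eq_rpow_s8 (hX.rpow_half_mul_mul_rpow_half hY), CFC.fidelity]

lemma nearLE_iff_le_fidelity {X Y : Matrix (Fin n) (Fin n) ℂ} (hX : X.PosDef) (hY : Y.PosDef) :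
    nearLE X Y ↔ X ≤ CFC.fidelity X Y := by
  have hXs := hX.isStrictlyPositive
  have hinv : X⁻¹ = X ^ (-1 : ℝ) := by
    rw [nonsing_inv_eq_ringInverse, CFC.inverse_eq_rpow_neg_one]
  rw [nearLE, loewnerLE, sharp, ← le_iff, mrpow_eq_rpow_s8 hX.inv, mrpow_eq_rpow_s8 hX.inv, hinv,
    CFC.rpow_rpow _ _ _ (by norm_num) hXs, CFC.rpow_rpow _ _ _ (by norm_num) hXs]
  simp only [neg_one_mul, neg_neg]
  rw [mrpow_eq_rpow_s8 (hX.rpow_half_mul_mul_rpow_half hY)]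
  exact CFC.one_le_rpow_neg_half_conjugate_iff hXs

lemma nearLE_fid_iff {X Y Z : Matrix (Fin n) (Fin n) ℂ} (hX : X.PosDef) (hY : Y.PosDef)
    (hZ : Z.PosDef) :
    nearLE (fid X Y) Z ↔ CFC.fidelity X Y ≤ CFC.fidelity (CFC.fidelity X Y) Z := by
  rw [fid_eq_fidelity hX hY, nearLE_iff_le_fidelity
    (hX.isStrictlyPositive.fidelity hY.isStrictlyPositive).posDef hZ]

end Matrix

theorem fid_nearLE_pow_of_fid_nearLE_sqrt {n : ℕ} (A B : Matrix (Fin n) (Fin n) ℂ)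
    (hA : A.PosDef) (hB : B.PosDef) (h : nearLE (fid B A) (mrpow B (1/2))) :
    ∀ k : ℕ, 1 ≤ k →
      nearLE (fid (mrpow B ((2 : ℝ) ^ k)) A) (mrpow B ((2 : ℝ) ^ (k - 1))) := by
  rw [mrpow_eq_rpow_s8 hB, nearLE_fid_iff hB hA (hB.rpow _)] at h
  intro k hk
  obtain ⟨m, rfl⟩ : ∃ m, k = m + 1 := ⟨k - 1, by omega⟩
  rw [Nat.add_sub_cancel, mrpow_eq_rpow_s8 hB, mrpow_eq_rpow_s8 hB,
    nearLE_fid_iff (hB.rpow _) hA (hB.rpow _)]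
  open scoped Matrix.Norms.L2Operator MatrixOrder in
  exact CFC.fidelity_rpow_two_pow_succ_le_fidelity hA.isStrictlyPositive
    hB.isStrictlyPositive h m
end

section
/- Let A₁, …, A_N be n×n positive definite complex matrices, let ω = (w₁, …, w_N) be a positive probability vector, let 0 ≤ t < z ≤ 1, and suppose the positive definite matrix X satisfies the Rényi power mean equation X = Σⱼ wⱼ (Aⱼ^{(1-t)/(2z)} X^{t/z} Aⱼ^{(1-t)/(2z)})^z. Then det X ≥ Πⱼ (det Aⱼ)^{wⱼ}, where all determinants are positive real numbers. -/
open Matrix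
open scoped ComplexOrder

/-!
Conjugating the fixed-point equation by `X^{-1/2}` writes the identity as a convex combination
`∑ wⱼ Dⱼ` of the positive definite matrices `Dⱼ = X^{-1/2} (Aⱼ^p X^{t/z} Aⱼ^p)^z X^{-1/2}`,
`p = (1 - t)/(2z)`, and multiplicativity of the determinant gives
`det Dⱼ = (det Aⱼ / det X)^{1-t}`. Applying `log λ ≤ λ - 1` to the eigenvalues gives
`log det D ≤ tr D - n`, so `∑ wⱼ log det Dⱼ ≤ tr 1 - n = 0`, i.e.
`(1 - t) (∑ wⱼ log det Aⱼ - log det X) ≤ 0`.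
-/

open Finset

lemma prod_rpow_le_of_sum_mul_log_le {ι : Type*} {s : Finset ι} {a w : ι → ℝ} {x : ℝ}
    (ha : ∀ j ∈ s, 0 < a j) (hx : 0 < x) (h : ∑ j ∈ s, w j * Real.log (a j) ≤ Real.log x) :
    ∏ j ∈ s, a j ^ w j ≤ x := by
  rw [← Real.log_le_log_iff (prod_pos fun j hj => Real.rpow_pos_of_pos (ha j hj) _) hx,
    Real.log_prod fun j hj => (Real.rpow_pos_of_pos (ha j hj) _).ne']
  rwa [sum_congr rfl fun j hj => Real.log_rpow (ha j hj) (w j)]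

namespace Matrix

variable {m ι 𝕜 : Type*} [Fintype m] [DecidableEq m] [Fintype ι] [RCLike 𝕜]

lemma IsHermitian.det_cfc {A : Matrix m m 𝕜} (hA : A.IsHermitian) (f : ℝ → ℝ) :
    (hA.cfc f).det = ∏ i, (f (hA.eigenvalues i) : 𝕜) := by
  rw [IsHermitian.cfc, Unitary.conjStarAlgAut_apply, det_mul_comm, ← Matrix.mul_assoc,
    Unitary.coe_star_mul_self, Matrix.one_mul, det_diagonal]
  rfl

lemma IsHermitian.posDef_cfc {A : Matrix m m 𝕜} (hA : A.IsHermitian) {f : ℝ → ℝ}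
    (hf : ∀ i, 0 < f (hA.eigenvalues i)) : (hA.cfc f).PosDef := by
  rw [IsHermitian.cfc, Unitary.conjStarAlgAut_apply,
    IsUnit.posDef_star_right_conjugate_iff Unitary.isUnit_coe, posDef_diagonal_iff]
  exact fun i => by simpa using hf i

lemma PosDef.mul_mul_same_of_isHermitian {P Q : Matrix m m 𝕜} (hQ : Q.PosDef)
    (hP : P.IsHermitian) (hPu : IsUnit P) : (P * Q * P).PosDef := by
  simpa only [star_eq_conjTranspose, hP.eq] using
    (IsUnit.posDef_star_right_conjugate_iff hPu).mpr hQ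

lemma log_re_det_mul_mul {P Q R : Matrix m m 𝕜} (hP : 0 < P.det) (hQ : 0 < Q.det)
    (hR : 0 < R.det) :
    Real.log (RCLike.re (P * Q * R).det) =
      Real.log (RCLike.re P.det) + Real.log (RCLike.re Q.det) + Real.log (RCLike.re R.det) := by
  obtain ⟨p, hp, hpP⟩ := RCLike.pos_iff_exists_ofReal.mp hP
  obtain ⟨q, hq, hqQ⟩ := RCLike.pos_iff_exists_ofReal.mp hQ
  obtain ⟨r, hr, hrR⟩ := RCLike.pos_iff_exists_ofReal.mp hR
  rw [det_mul, det_mul, ← hpP, ← hqQ, ← hrR, ← RCLike.ofReal_mul, ← RCLike.ofReal_mul]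
  simp only [RCLike.ofReal_re]
  rw [Real.log_mul (by positivity) hr.ne', Real.log_mul hp.ne' hq.ne']

lemma PosDef.log_det_le_trace_sub_card {P : Matrix m m 𝕜} (hP : P.PosDef) :
    Real.log (RCLike.re P.det) ≤ RCLike.re P.trace - Fintype.card m := by
  rw [hP.isHermitian.det_eq_prod_eigenvalues, hP.isHermitian.trace_eq_sum_eigenvalues,
    ← RCLike.ofReal_prod, ← RCLike.ofReal_sum, RCLike.ofReal_re, RCLike.ofReal_re,
    Real.log_prod fun i _ => (hP.eigenvalues_pos i).ne', Fintype.card_eq_sum_ones, Nat.cast_sum,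
    Nat.cast_one, ← sum_sub_distrib]
  exact sum_le_sum fun i _ => Real.log_le_sub_one_of_pos (hP.eigenvalues_pos i)

theorem sum_mul_log_det_nonpos {P : ι → Matrix m m 𝕜} {w : ι → ℝ} (hP : ∀ j, (P j).PosDef)
    (hw : ∀ j, 0 ≤ w j) (hw1 : ∑ j, w j = 1) (hPw : ∑ j, w j • P j = 1) :
    ∑ j, w j * Real.log (RCLike.re (P j).det) ≤ 0 := by
  have htrace : ∑ j, w j * RCLike.re (P j).trace = Fintype.card m := by
    simpa [trace_sum, trace_smul, RCLike.smul_re] using congrArg (RCLike.re ·.trace) hPw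
  calc ∑ j, w j * Real.log (RCLike.re (P j).det)
      ≤ ∑ j, w j * (RCLike.re (P j).trace - Fintype.card m) :=
        sum_le_sum fun j _ => mul_le_mul_of_nonneg_left (hP j).log_det_le_trace_sub_card (hw j)
    _ = 0 := by simp only [mul_sub, sum_sub_distrib, ← sum_mul, htrace, hw1]; ring

end Matrix

section mrpow

variable {n : ℕ} {X A : Matrix (Fin n) (Fin n) ℂ}

lemma mrpow_eq_cfc (hX : X.IsHermitian) (r : ℝ) : mrpow X r = hX.cfc (· ^ r) := by
  rw [mrpow, dif_pos hX, IsHermitian.cfc, Unitary.conjStarAlgAut_apply]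
  rfl

lemma posDef_mrpow (hX : X.PosDef) (r : ℝ) : (mrpow X r).PosDef := by
  rw [mrpow_eq_cfc hX.isHermitian]
  exact hX.isHermitian.posDef_cfc fun i => Real.rpow_pos_of_pos (hX.eigenvalues_pos i) r

lemma Matrix.PosDef.mrpow_mul_mul_mrpow {Q : Matrix (Fin n) (Fin n) ℂ} (hQ : Q.PosDef)
    (hX : X.PosDef) (r : ℝ) : (mrpow X r * Q * mrpow X r).PosDef :=
  hQ.mul_mul_same_of_isHermitian (posDef_mrpow hX r).isHermitian (posDef_mrpow hX r).isUnit

lemma log_re_det_mrpow (hX : X.PosDef) (r : ℝ) :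
    Real.log (mrpow X r).det.re = r * Real.log X.det.re := by
  rw [mrpow_eq_cfc hX.isHermitian, hX.isHermitian.det_cfc, hX.isHermitian.det_eq_prod_eigenvalues,
    ← RCLike.ofReal_prod, ← RCLike.ofReal_prod]
  simp only [← RCLike.re_to_complex, RCLike.ofReal_re]
  rw [Real.log_prod fun i _ => (Real.rpow_pos_of_pos (hX.eigenvalues_pos i) r).ne',
    Real.log_prod fun i _ => (hX.eigenvalues_pos i).ne', mul_sum]
  exact sum_congr rfl fun i _ => Real.log_rpow (hX.eigenvalues_pos i) r

lemma mrpow_neg_half_mul_mul_mrpow_neg_half (hX : X.PosDef) :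
    mrpow X (-(1 / 2)) * X * mrpow X (-(1 / 2)) = 1 := by
  conv_lhs => arg 1; arg 2; rw [hX.isHermitian.spectral_theorem]
  rw [mrpow_eq_cfc hX.isHermitian, IsHermitian.cfc, ← map_mul, ← map_mul, diagonal_mul_diagonal,
    diagonal_mul_diagonal,
    ← map_one (Unitary.conjStarAlgAut ℂ _ hX.isHermitian.eigenvectorUnitary), ← diagonal_one]
  congr 2
  ext i
  simp only [Function.comp_apply, Complex.coe_algebraMap, ← Complex.ofReal_mul,
    ← Real.rpow_add_one (hX.eigenvalues_pos i).ne', ← Real.rpow_add (hX.eigenvalues_pos i),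
    Complex.ofReal_eq_one]
  norm_num

lemma log_re_det_renyi_term (hA : A.PosDef) (hX : X.PosDef) {t z : ℝ} (hz : z ≠ 0) :
    Real.log (mrpow X (-(1 / 2)) *
      mrpow (mrpow A ((1 - t) / (2 * z)) * mrpow X (t / z) * mrpow A ((1 - t) / (2 * z))) z *
      mrpow X (-(1 / 2))).det.re = (1 - t) * (Real.log A.det.re - Real.log X.det.re) := by
  have hB := (posDef_mrpow hX (t / z)).mrpow_mul_mul_mrpow hA ((1 - t) / (2 * z))
  have hY := posDef_mrpow hX (-(1 / 2))
  have hdet := log_re_det_mul_mul hY.det_pos (posDef_mrpow hB z).det_pos hY.det_pos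
  have hdetB := log_re_det_mul_mul (posDef_mrpow hA ((1 - t) / (2 * z))).det_pos
    (posDef_mrpow hX (t / z)).det_pos (posDef_mrpow hA ((1 - t) / (2 * z))).det_pos
  simp only [RCLike.re_to_complex] at hdet hdetB
  rw [hdet, log_re_det_mrpow hX, log_re_det_mrpow hB, hdetB, log_re_det_mrpow hA,
    log_re_det_mrpow hX]
  field_simp
  ring

end mrpow

theorem renyi_det_ge {n N : ℕ}
    (A : Fin N → Matrix (Fin n) (Fin n) ℂ) (hA : ∀ j, (A j).PosDef)
    (w : Fin N → ℝ) (hw : ∀ j, 0 < w j) (hw1 : ∑ j, w j = 1)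
    (t z : ℝ) (ht0 : 0 ≤ t) (htz : t < z) (hz1 : z ≤ 1)
    (X : Matrix (Fin n) (Fin n) ℂ) (hX : X.PosDef)
    (hfix : X = ∑ j, w j •
      mrpow (mrpow (A j) ((1 - t) / (2 * z)) * mrpow X (t / z) *
        mrpow (A j) ((1 - t) / (2 * z))) z) :
    ∏ j, ((A j).det.re) ^ (w j) ≤ X.det.re := by
  set C : Fin N → Matrix (Fin n) (Fin n) ℂ := fun j =>
    mrpow (mrpow (A j) ((1 - t) / (2 * z)) * mrpow X (t / z) * mrpow (A j) ((1 - t) / (2 * z))) z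
  set Y := mrpow X (-(1 / 2))
  have hD (j : Fin N) : (Y * C j * Y).PosDef :=
    (posDef_mrpow ((posDef_mrpow hX _).mrpow_mul_mul_mrpow (hA j) _) z).mrpow_mul_mul_mrpow hX _
  have hDsum : ∑ j, w j • (Y * C j * Y) = 1 := calc
    _ = Y * (∑ j, w j • C j) * Y := by simp only [mul_sum, sum_mul, Matrix.mul_smul, Matrix.smul_mul]
    _ = 1 := by rw [← hfix, mrpow_neg_half_mul_mul_mrpow_neg_half hX]
  have hlog := sum_mul_log_det_nonpos hD (fun j => (hw j).le) hw1 hDsum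
  simp only [RCLike.re_to_complex, Y, C, log_re_det_renyi_term (hA _) hX (ht0.trans_lt htz).ne']
    at hlog
  have hdet_pos {P : Matrix (Fin n) (Fin n) ℂ} (hP : P.PosDef) : 0 < P.det.re :=
    (Complex.pos_iff.mp hP.det_pos).1
  have hmean : ∑ j, w j * Real.log (A j).det.re ≤ Real.log X.det.re := by
    have hsplit : ∑ j, w j * ((1 - t) * (Real.log (A j).det.re - Real.log X.det.re)) =
        (1 - t) * (∑ j, w j * Real.log (A j).det.re - (∑ j, w j) * Real.log X.det.re) := by
      rw [sum_mul, ← sum_sub_distrib, mul_sum]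
      exact sum_congr rfl fun j _ => by ring
    rw [hsplit, hw1, one_mul] at hlog
    exact sub_nonpos.mp (nonpos_of_mul_nonpos_right hlog (by linarith))
  exact prod_rpow_le_of_sum_mul_log_le (fun j _ => hdet_pos (hA j)) (hdet_pos hX) hmean
end
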